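/- arXiv:2008.04026 — 5 statements merged into one kernel-verified Lean document; each statement's English description precedes it below -/
import Mathlib

section
/- In any right alternative superalgebra A (i.e., a Z_2-graded algebra satisfying as(x,y,z) = -(-1)^{|y||z|} as(x,z,y) for the associator as(x,y,z) = (xy)z - x(yz)), the identity as([w,x],y,z) = [w, as(x,y,z)] + (-1)^{|x|(|y|+|z|)}[as(w,y,z), x] - as(w,x,[y,z]) + (-1)^{|w||x|} as(x,w,[y,z]) holds for all homogeneous w,x,y,z, where [a,b] = (1/2)(ab - (-1)^{|a||b|} ba). -/
def sgn (K : Type*) [Field K] (i j : ZMod 2) : K := (-1 : K) ^ (i * j).val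

def IsBilin (K : Type*) {A : Type*} [Field K] [AddCommGroup A] [Module K A]
    (f : A → A → A) : Prop :=
  (∀ (c : K) (x y : A), f (c • x) y = c • f x y) ∧
  (∀ x x' y : A, f (x + x') y = f x y + f x' y) ∧
  (∀ (c : K) (x y : A), f x (c • y) = c • f x y) ∧
  (∀ x y y' : A, f x (y + y') = f x y + f x y')

def IsTrilin (K : Type*) {A : Type*} [Field K] [AddCommGroup A] [Module K A]
    (f : A → A → A → A) : Prop :=
  (∀ (c : K) (x y z : A), f (c • x) y z = c • f x y z) ∧
  (∀ x x' y z : A, f (x + x') y z = f x y z + f x' y z) ∧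
  (∀ (c : K) (x y z : A), f x (c • y) z = c • f x y z) ∧
  (∀ x y y' z : A, f x (y + y') z = f x y z + f x y' z) ∧
  (∀ (c : K) (x y z : A), f x y (c • z) = c • f x y z) ∧
  (∀ x y z z' : A, f x y (z + z') = f x y z + f x y z')

def asc {A : Type*} [AddCommGroup A] (mul : A → A → A) (x y z : A) : A :=
  mul (mul x y) z - mul x (mul y z)

def hasc {A : Type*} [AddCommGroup A] (mul : A → A → A) (α : A → A) (x y z : A) : A :=
  mul (mul x y) (α z) - mul (α x) (mul y z)

def br (K : Type*) {A : Type*} [Field K] [AddCommGroup A] [Module K A]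
    (mul : A → A → A) (i j : ZMod 2) (x y : A) : A :=
  (2 : K)⁻¹ • (mul x y - sgn K i j • mul y x)

def jp (K : Type*) {A : Type*} [Field K] [AddCommGroup A] [Module K A]
    (mul : A → A → A) (i j : ZMod 2) (x y : A) : A :=
  (2 : K)⁻¹ • (mul x y + sgn K i j • mul y x)

/-!
In a right alternative superalgebra the "function identity"
`(wx, y, z) = w (x, y, z) + (-1)^{|x|(|y|+|z|)} (w, y, z) x - (w, x, yz) + (-1)^{|y||z|} (w, x, zy)`
holds. It comes from the Teichmüller identity
`(wx, y, z) - (w, xy, z) + (w, x, yz) = w (x, y, z) + (w, x, y) z`, valid in every algebra, once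
`(w, xy, z)` is eliminated: summing the Teichmüller identities for `(w, a, b, c)` and `(w, a, c, b)`
and using right alternativity gives a relation among associators with a product in the third slot,
and a signed sum of three such relations does it (this is where `2` must be invertible).
The theorem is half the difference of the function identity at `(w, x)` and `(-1)^{|w||x|}`
times the function identity at `(x, w)`.
-/

theorem sgn_comm (K : Type*) [Field K] (i j : ZMod 2) : sgn K i j = sgn K j i := by
  rw [sgn, sgn, mul_comm]

theorem sgn_add_left (K : Type*) [Field K] (i j k : ZMod 2) :
    sgn K (i + j) k = sgn K i k * sgn K j k := by
  rw [sgn, sgn, sgn, add_mul, ZMod.val_add, ← neg_one_pow_eq_pow_mod_two, pow_add]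

theorem sgn_add_right (K : Type*) [Field K] (i j k : ZMod 2) :
    sgn K i (j + k) = sgn K i j * sgn K i k := by
  rw [sgn_comm, sgn_add_left, sgn_comm K j, sgn_comm K k]

theorem sgn_sq (K : Type*) [Field K] (i j : ZMod 2) : sgn K i j ^ 2 = 1 := by
  rw [sgn, ← pow_mul, pow_mul', neg_one_sq, one_pow]

theorem asc_teichmuller {A : Type*} [AddCommGroup A] (mul : A → A → A)
    (sub_left : ∀ a b c, mul (a - b) c = mul a c - mul b c)
    (sub_right : ∀ a b c, mul a (b - c) = mul a b - mul a c) (w x y z : A) :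
    asc mul (mul w x) y z - asc mul w (mul x y) z + asc mul w x (mul y z)
      = mul w (asc mul x y z) + mul (asc mul w x y) z := by
  simp only [asc, sub_left, sub_right]
  abel

namespace IsBilin

variable {K A : Type*} [Field K] [AddCommGroup A] [Module K A] {f : A → A → A}

theorem map_smul_left (hf : IsBilin K f) (c : K) (a b : A) : f (c • a) b = c • f a b :=
  hf.1 c a b

theorem map_smul_right (hf : IsBilin K f) (c : K) (a b : A) : f a (c • b) = c • f a b :=
  hf.2.2.1 c a b

theorem map_sub_left (hf : IsBilin K f) (a b c : A) : f (a - b) c = f a c - f b c := by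
  rw [sub_eq_add_neg, hf.2.1, ← neg_one_smul K b, hf.map_smul_left, neg_one_smul,
    ← sub_eq_add_neg]

theorem map_sub_right (hf : IsBilin K f) (a b c : A) : f a (b - c) = f a b - f a c := by
  rw [sub_eq_add_neg, hf.2.2.2, ← neg_one_smul K c, hf.map_smul_right, neg_one_smul,
    ← sub_eq_add_neg]

theorem asc_smul_left (hf : IsBilin K f) (c : K) (a y z : A) :
    asc f (c • a) y z = c • asc f a y z := by
  simp only [asc, hf.map_smul_left, smul_sub]

theorem asc_sub_left (hf : IsBilin K f) (a b y z : A) :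
    asc f (a - b) y z = asc f a y z - asc f b y z := by
  simp only [asc, hf.map_sub_left]
  abel

theorem asc_smul_right (hf : IsBilin K f) (c : K) (x y a : A) :
    asc f x y (c • a) = c • asc f x y a := by
  simp only [asc, hf.map_smul_right, smul_sub]

theorem asc_sub_right (hf : IsBilin K f) (x y a b : A) :
    asc f x y (a - b) = asc f x y a - asc f x y b := by
  simp only [asc, hf.map_sub_right]
  abel

end IsBilin

structure IsRightAlternativeSuperalgebra (K : Type*) {A : Type*} [Field K] [AddCommGroup A]
    [Module K A] (𝒜 : ZMod 2 → Submodule K A) (mul : A → A → A) : Prop where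
  bilin : IsBilin K mul
  mul_mem : ∀ (i j : ZMod 2) (x y : A), x ∈ 𝒜 i → y ∈ 𝒜 j → mul x y ∈ 𝒜 (i + j)
  asc_swap : ∀ (i j k : ZMod 2) (x y z : A), x ∈ 𝒜 i → y ∈ 𝒜 j → z ∈ 𝒜 k →
    asc mul x y z = (-(sgn K j k)) • asc mul x z y

namespace IsRightAlternativeSuperalgebra

variable {K A : Type*} [Field K] [AddCommGroup A] [Module K A] {𝒜 : ZMod 2 → Submodule K A}
  {mul : A → A → A}

theorem mul_asc_swap (hA : IsRightAlternativeSuperalgebra K 𝒜 mul) {i j k : ZMod 2}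
    {x y z : A} (hx : x ∈ 𝒜 i) (hy : y ∈ 𝒜 j) (hz : z ∈ 𝒜 k) (w : A) :
    mul w (asc mul x y z) = (-(sgn K j k)) • mul w (asc mul x z y) := by
  rw [hA.asc_swap i j k x y z hx hy hz, hA.bilin.map_smul_right]

theorem asc_swap_mul (hA : IsRightAlternativeSuperalgebra K 𝒜 mul) {i j k : ZMod 2}
    {x y z : A} (hx : x ∈ 𝒜 i) (hy : y ∈ 𝒜 j) (hz : z ∈ 𝒜 k) (w : A) :
    mul (asc mul x y z) w = (-(sgn K j k)) • mul (asc mul x z y) w := by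
  rw [hA.asc_swap i j k x y z hx hy hz, hA.bilin.map_smul_left]

theorem asc_mul_third (hA : IsRightAlternativeSuperalgebra K 𝒜 mul) {p i j k : ZMod 2}
    {w a b c : A} (hw : w ∈ 𝒜 p) (ha : a ∈ 𝒜 i) (hb : b ∈ 𝒜 j) (hc : c ∈ 𝒜 k) :
    asc mul w a (mul b c) + sgn K j k • asc mul w a (mul c b)
        + sgn K (i + j) k • asc mul w c (mul a b)
        + (sgn K j k * sgn K (i + k) j) • asc mul w b (mul a c)
      = mul (asc mul w a b) c + sgn K j k • mul (asc mul w a c) b := by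
  have teich := asc_teichmuller mul hA.bilin.map_sub_left hA.bilin.map_sub_right
  linear_combination (norm := module) teich w a b c + sgn K j k • teich w a c b
    - hA.asc_swap _ j k _ b c (hA.mul_mem p i w a hw ha) hb hc + hA.mul_asc_swap ha hb hc w
    + hA.asc_swap p _ k w _ c hw (hA.mul_mem i j a b ha hb) hc
    + sgn K j k • hA.asc_swap p _ j w _ b hw (hA.mul_mem i k a c ha hc) hb

theorem asc_mul_third_swap (hA : IsRightAlternativeSuperalgebra K 𝒜 mul) (h2 : (2 : K) ≠ 0)
    {p q r s : ZMod 2} {w x y z : A} (hw : w ∈ 𝒜 p) (hx : x ∈ 𝒜 q) (hy : y ∈ 𝒜 r)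
    (hz : z ∈ 𝒜 s) :
    sgn K r s • asc mul w x (mul z y) + sgn K (q + r) s • asc mul w z (mul x y)
      = mul (asc mul w x y) z - sgn K q (r + s) • mul (asc mul w y z) x := by
  linear_combination (norm := skip) (2 : K)⁻¹ • (hA.asc_mul_third hw hx hy hz
    - sgn K q r • hA.asc_mul_third hw hy hx hz + sgn K (q + r) s • hA.asc_mul_third hw hz hx hy
    - sgn K q r • hA.asc_swap_mul hw hy hx z + sgn K (q + r) s • hA.asc_swap_mul hw hz hx y
    + (sgn K (q + r) s * sgn K q r) • hA.asc_swap_mul hw hz hy x)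
  -- once `sgn` is split multiplicatively, the scalar goals hold modulo `sgn K i j ^ 2 = 1`
  simp only [sgn_add_left, sgn_add_right, sgn_comm K s q, sgn_comm K r q, sgn_comm K s r]
  match_scalars <;> field_simp <;> ring_nf <;> simp only [sgn_sq] <;> ring_nf

theorem asc_mul_first (hA : IsRightAlternativeSuperalgebra K 𝒜 mul) (h2 : (2 : K) ≠ 0)
    {p q r s : ZMod 2} {w x y z : A} (hw : w ∈ 𝒜 p) (hx : x ∈ 𝒜 q) (hy : y ∈ 𝒜 r)
    (hz : z ∈ 𝒜 s) :
    asc mul (mul w x) y z = mul w (asc mul x y z) + sgn K q (r + s) • mul (asc mul w y z) x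
      - asc mul w x (mul y z) + sgn K r s • asc mul w x (mul z y) := by
  linear_combination (norm := module)
    asc_teichmuller mul hA.bilin.map_sub_left hA.bilin.map_sub_right w x y z
    + hA.asc_swap p _ s w _ z hw (hA.mul_mem q r x y hx hy) hz
    - hA.asc_mul_third_swap h2 hw hx hy hz

end IsRightAlternativeSuperalgebra

theorem stmt0_general {K A : Type*} [Field K] [AddCommGroup A] [Module K A]
    (h2 : (2 : K) ≠ 0)
    (𝒜 : ZMod 2 → Submodule K A)
    (mul : A → A → A) (hbil : IsBilin K mul)
    (hgr : ∀ (i j : ZMod 2) (x y : A), x ∈ 𝒜 i → y ∈ 𝒜 j → mul x y ∈ 𝒜 (i + j))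
    (halt : ∀ (i j k : ZMod 2) (x y z : A), x ∈ 𝒜 i → y ∈ 𝒜 j → z ∈ 𝒜 k →
      asc mul x y z = (-(sgn K j k)) • asc mul x z y)
    (p q r s : ZMod 2) (w x y z : A)
    (hw : w ∈ 𝒜 p) (hx : x ∈ 𝒜 q) (hy : y ∈ 𝒜 r) (hz : z ∈ 𝒜 s) :
    asc mul (br K mul p q w x) y z
      = br K mul p (q + r + s) w (asc mul x y z)
        + sgn K q (r + s) • br K mul (p + r + s) q (asc mul w y z) x
        - asc mul w x (br K mul r s y z)
        + sgn K p q • asc mul x w (br K mul r s y z) := by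
  have hA : IsRightAlternativeSuperalgebra K 𝒜 mul := ⟨hbil, hgr, halt⟩
  simp only [br, hbil.asc_smul_left, hbil.asc_sub_left, hbil.asc_smul_right, hbil.asc_sub_right,
    hA.asc_mul_first h2 hw hx hy hz, hA.asc_mul_first h2 hx hw hy hz]
  simp only [sgn_add_left, sgn_add_right, sgn_comm K r q, sgn_comm K s q]
  match_scalars <;> ring_nf
  simp only [sgn_sq]
  ring_nf

/-- In any right alternative superalgebra, the identity (2.4) holds. -/
theorem stmt0 {K A : Type*} [Field K] [AddCommGroup A] [Module K A]
    (h2 : (2 : K) ≠ 0) (h3 : (3 : K) ≠ 0)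
    (𝒜 : ZMod 2 → Submodule K A) (hds : DirectSum.IsInternal 𝒜)
    (mul : A → A → A) (hbil : IsBilin K mul)
    (hgr : ∀ (i j : ZMod 2) (x y : A), x ∈ 𝒜 i → y ∈ 𝒜 j → mul x y ∈ 𝒜 (i + j))
    (halt : ∀ (i j k : ZMod 2) (x y z : A), x ∈ 𝒜 i → y ∈ 𝒜 j → z ∈ 𝒜 k →
      asc mul x y z = (-(sgn K j k)) • asc mul x z y)
    (p q r s : ZMod 2) (w x y z : A)
    (hw : w ∈ 𝒜 p) (hx : x ∈ 𝒜 q) (hy : y ∈ 𝒜 r) (hz : z ∈ 𝒜 s) :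
    asc mul (br K mul p q w x) y z
      = br K mul p (q + r + s) w (asc mul x y z)
        + sgn K q (r + s) • br K mul (p + r + s) q (asc mul w y z) x
        - asc mul w x (br K mul r s y z)
        + sgn K p q • asc mul x w (br K mul r s y z) :=
  stmt0_general h2 𝒜 mul hbil hgr halt p q r s w x y z hw hx hy hz
end

section
/- Let (A,[·,·],{·,·,·},α) be a Hom-Bol superalgebra and β an even self-morphism of it (β commutes with α and preserves both operations). For any n ≥ 0, define [x,y]_{β^n} := β^n([x,y]) and {x,y,z}_{β^n} := β^{2n}({x,y,z}). Then (A, [·,·]_{β^n}, {·,·,·}_{β^n}, β^n ∘ α) is a Hom-Bol superalgebra. -/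
/-- A Hom-Bol superalgebra structure on a graded module. -/
structure IsHomBol (K : Type*) {A : Type*} [Field K] [AddCommGroup A] [Module K A]
    (𝒜 : ZMod 2 → Submodule K A) (brk : A → A → A) (tr : A → A → A → A)
    (α : A → A) : Prop where
  brk_bilin : IsBilin K brk
  tr_trilin : IsTrilin K tr
  alpha_smul : ∀ (c : K) (x : A), α (c • x) = c • α x
  alpha_add : ∀ x y : A, α (x + y) = α x + α y
  alpha_even : ∀ (i : ZMod 2) (x : A), x ∈ 𝒜 i → α x ∈ 𝒜 i
  brk_grade : ∀ (i j : ZMod 2) (x y : A), x ∈ 𝒜 i → y ∈ 𝒜 j → brk x y ∈ 𝒜 (i + j)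
  tr_grade : ∀ (i j k : ZMod 2) (x y z : A),
    x ∈ 𝒜 i → y ∈ 𝒜 j → z ∈ 𝒜 k → tr x y z ∈ 𝒜 (i + j + k)
  brk_mult : ∀ x y : A, α (brk x y) = brk (α x) (α y)
  tr_mult : ∀ x y z : A, α (tr x y z) = tr (α x) (α y) (α z)
  shb1 : ∀ (i j : ZMod 2) (x y : A), x ∈ 𝒜 i → y ∈ 𝒜 j →
    brk x y = (-(sgn K i j)) • brk y x
  shb2 : ∀ (i j k : ZMod 2) (x y z : A), x ∈ 𝒜 i → y ∈ 𝒜 j → z ∈ 𝒜 k →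
    tr x y z = (-(sgn K i j)) • tr y x z
  shb3 : ∀ (i j k : ZMod 2) (x y z : A), x ∈ 𝒜 i → y ∈ 𝒜 j → z ∈ 𝒜 k →
    tr x y z + sgn K i (j + k) • tr y z x + sgn K k (i + j) • tr z x y = 0
  shb4 : ∀ (i j p q : ZMod 2) (x y u v : A),
    x ∈ 𝒜 i → y ∈ 𝒜 j → u ∈ 𝒜 p → v ∈ 𝒜 q →
    tr (α x) (α y) (brk u v)
      = brk (tr x y u) (α (α v)) + sgn K p (i + j) • brk (α (α u)) (tr x y v)
        + sgn K (i + j) (p + q) •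
          (tr (α u) (α v) (brk x y) - brk (brk (α u) (α v)) (brk (α x) (α y)))
  shb5 : ∀ (i j p q r : ZMod 2) (x y u v w : A),
    x ∈ 𝒜 i → y ∈ 𝒜 j → u ∈ 𝒜 p → v ∈ 𝒜 q → w ∈ 𝒜 r →
    tr (α (α x)) (α (α y)) (tr u v w)
      = tr (tr x y u) (α (α v)) (α (α w))
        + sgn K p (i + j) • tr (α (α u)) (tr x y v) (α (α w))
        + sgn K (i + j) (p + q) • tr (α (α u)) (α (α v)) (tr x y w)

/-!
Since `γ` is linear, preserves both operations and commutes with `α`, every occurrence of `γ` in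
an axiom of the twisted structure can be pushed to the outside, which turns it into a power of `γ`
applied to the corresponding axiom of the original one. Powers `β^n` of a morphism are again
morphisms, and `β^{2n} = β^n ∘ β^n`.
-/

structure IsHomBolEndo (K : Type*) {A : Type*} [Field K] [AddCommGroup A] [Module K A]
    (𝒜 : ZMod 2 → Submodule K A) (brk : A → A → A) (tr : A → A → A → A)
    (α γ : A → A) : Prop where
  map_smul : ∀ (c : K) (x : A), γ (c • x) = c • γ x
  map_add : ∀ x y : A, γ (x + y) = γ x + γ y
  map_mem : ∀ (i : ZMod 2) (x : A), x ∈ 𝒜 i → γ x ∈ 𝒜 i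
  map_brk : ∀ x y : A, γ (brk x y) = brk (γ x) (γ y)
  map_tr : ∀ x y z : A, γ (tr x y z) = tr (γ x) (γ y) (γ z)
  comm_alpha : ∀ x : A, γ (α x) = α (γ x)

section

variable {K A : Type*} [Field K] [AddCommGroup A] [Module K A] {𝒜 : ZMod 2 → Submodule K A}
  {brk : A → A → A} {tr : A → A → A → A} {α γ δ : A → A}

namespace IsHomBolEndo

theorem id : IsHomBolEndo K 𝒜 brk tr α id :=
  ⟨fun _ _ => rfl, fun _ _ => rfl, fun _ _ h => h, fun _ _ => rfl, fun _ _ _ => rfl,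
    fun _ => rfl⟩

theorem comp (hγ : IsHomBolEndo K 𝒜 brk tr α γ) (hδ : IsHomBolEndo K 𝒜 brk tr α δ) :
    IsHomBolEndo K 𝒜 brk tr α (γ ∘ δ) where
  map_smul c x := by simp only [Function.comp_apply, hδ.map_smul, hγ.map_smul]
  map_add x y := by simp only [Function.comp_apply, hδ.map_add, hγ.map_add]
  map_mem i x hx := hγ.map_mem i _ (hδ.map_mem i x hx)
  map_brk x y := by simp only [Function.comp_apply, hδ.map_brk, hγ.map_brk]
  map_tr x y z := by simp only [Function.comp_apply, hδ.map_tr, hγ.map_tr]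
  comm_alpha x := by simp only [Function.comp_apply, hδ.comm_alpha, hγ.comm_alpha]

theorem iterate (hγ : IsHomBolEndo K 𝒜 brk tr α γ) (m : ℕ) :
    IsHomBolEndo K 𝒜 brk tr α γ^[m] := by
  induction m with
  | zero => exact id
  | succ m ih => rw [Function.iterate_succ]; exact ih.comp hγ

theorem map_zero (hγ : IsHomBolEndo K 𝒜 brk tr α γ) : γ 0 = 0 := by
  simpa using hγ.map_smul 0 0

theorem map_sub (hγ : IsHomBolEndo K 𝒜 brk tr α γ) (x y : A) : γ (x - y) = γ x - γ y := by
  rw [sub_eq_add_neg, hγ.map_add, ← neg_one_smul K y, hγ.map_smul, neg_one_smul,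
    ← sub_eq_add_neg]

end IsHomBolEndo

theorem IsBilin.comp {f : A → A → A} (hf : IsBilin K f)
    (hsmul : ∀ (c : K) (x : A), γ (c • x) = c • γ x) (hadd : ∀ x y : A, γ (x + y) = γ x + γ y) :
    IsBilin K (fun x y => γ (f x y)) := by
  obtain ⟨h₁, h₂, h₃, h₄⟩ := hf
  exact ⟨fun c x y => by simp only [h₁, hsmul], fun x x' y => by simp only [h₂, hadd],
    fun c x y => by simp only [h₃, hsmul], fun x y y' => by simp only [h₄, hadd]⟩

theorem IsTrilin.comp {f : A → A → A → A} (hf : IsTrilin K f)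
    (hsmul : ∀ (c : K) (x : A), γ (c • x) = c • γ x) (hadd : ∀ x y : A, γ (x + y) = γ x + γ y) :
    IsTrilin K (fun x y z => γ (f x y z)) := by
  obtain ⟨h₁, h₂, h₃, h₄, h₅, h₆⟩ := hf
  exact ⟨fun c x y z => by simp only [h₁, hsmul], fun x x' y z => by simp only [h₂, hadd],
    fun c x y z => by simp only [h₃, hsmul], fun x y y' z => by simp only [h₄, hadd],
    fun c x y z => by simp only [h₅, hsmul], fun x y z z' => by simp only [h₆, hadd]⟩

theorem IsHomBol.twist (hB : IsHomBol K 𝒜 brk tr α) (hγ : IsHomBolEndo K 𝒜 brk tr α γ) :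
    IsHomBol K 𝒜 (fun x y => γ (brk x y)) (fun x y z => γ (γ (tr x y z)))
      (fun x => γ (α x)) := by
  have smul_out (c : K) (x : A) : c • γ x = γ (c • x) := (hγ.map_smul c x).symm
  have add_out (x y : A) : γ x + γ y = γ (x + y) := (hγ.map_add x y).symm
  have sub_out (x y : A) : γ x - γ y = γ (x - y) := (hγ.map_sub x y).symm
  have brk_out (x y : A) : brk (γ x) (γ y) = γ (brk x y) := (hγ.map_brk x y).symm
  have tr_out (x y z : A) : tr (γ x) (γ y) (γ z) = γ (tr x y z) := (hγ.map_tr x y z).symm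
  have alpha_out (x : A) : α (γ x) = γ (α x) := (hγ.comm_alpha x).symm
  exact
    { brk_bilin := hB.brk_bilin.comp hγ.map_smul hγ.map_add
      tr_trilin := (hB.tr_trilin.comp hγ.map_smul hγ.map_add).comp hγ.map_smul hγ.map_add
      alpha_smul := fun c x => by simp only [hB.alpha_smul, hγ.map_smul]
      alpha_add := fun x y => by simp only [hB.alpha_add, hγ.map_add]
      alpha_even := fun i x hx => hγ.map_mem i _ (hB.alpha_even i x hx)
      brk_grade := fun i j x y hx hy => hγ.map_mem _ _ (hB.brk_grade i j x y hx hy)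
      tr_grade := fun i j k x y z hx hy hz =>
        hγ.map_mem _ _ (hγ.map_mem _ _ (hB.tr_grade i j k x y z hx hy hz))
      brk_mult := fun x y => by simp only [alpha_out, brk_out, hB.brk_mult]
      tr_mult := fun x y z => by simp only [alpha_out, tr_out, hB.tr_mult]
      shb1 := fun i j x y hx hy => by simp only [hB.shb1 i j x y hx hy, hγ.map_smul]
      shb2 := fun i j k x y z hx hy hz => by
        simp only [hB.shb2 i j k x y z hx hy hz, hγ.map_smul]
      shb3 := fun i j k x y z hx hy hz => by
        simp only [smul_out, add_out, hB.shb3 i j k x y z hx hy hz, hγ.map_zero]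
      shb4 := fun i j p q x y u v hx hy hu hv => by
        simp only [alpha_out, brk_out, tr_out, smul_out, add_out, sub_out,
          hB.shb4 i j p q x y u v hx hy hu hv]
      shb5 := fun i j p q r x y u v w hx hy hu hv hw => by
        simp only [alpha_out, tr_out, smul_out, add_out,
          hB.shb5 i j p q r x y u v w hx hy hu hv hw] }

end

theorem stmt7_general {K A : Type*} [Field K] [AddCommGroup A] [Module K A]
    (𝒜 : ZMod 2 → Submodule K A)
    (brk : A → A → A) (tr : A → A → A → A) (α : A → A)
    (hB : IsHomBol K 𝒜 brk tr α)
    (β : A → A)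
    (hβsmul : ∀ (c : K) (x : A), β (c • x) = c • β x)
    (hβadd : ∀ x y : A, β (x + y) = β x + β y)
    (hβeven : ∀ (i : ZMod 2) (x : A), x ∈ 𝒜 i → β x ∈ 𝒜 i)
    (hβbrk : ∀ x y : A, β (brk x y) = brk (β x) (β y))
    (hβtr : ∀ x y z : A, β (tr x y z) = tr (β x) (β y) (β z))
    (hβα : ∀ x : A, β (α x) = α (β x))
    (n : ℕ) :
    IsHomBol K 𝒜 (fun x y => β^[n] (brk x y)) (fun x y z => β^[2 * n] (tr x y z))
      (fun x => β^[n] (α x)) := by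
  have hβ : IsHomBolEndo K 𝒜 brk tr α β := ⟨hβsmul, hβadd, hβeven, hβbrk, hβtr, hβα⟩
  simpa only [two_mul, Function.iterate_add_apply] using hB.twist (hβ.iterate n)

/-- Theorem 5.1: twisting a Hom-Bol superalgebra by powers of an even
self-morphism yields a Hom-Bol superalgebra. -/
theorem stmt7 {K A : Type*} [Field K] [AddCommGroup A] [Module K A]
    (𝒜 : ZMod 2 → Submodule K A) (hds : DirectSum.IsInternal 𝒜)
    (brk : A → A → A) (tr : A → A → A → A) (α : A → A)
    (hB : IsHomBol K 𝒜 brk tr α)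
    (β : A → A)
    (hβsmul : ∀ (c : K) (x : A), β (c • x) = c • β x)
    (hβadd : ∀ x y : A, β (x + y) = β x + β y)
    (hβeven : ∀ (i : ZMod 2) (x : A), x ∈ 𝒜 i → β x ∈ 𝒜 i)
    (hβbrk : ∀ x y : A, β (brk x y) = brk (β x) (β y))
    (hβtr : ∀ x y z : A, β (tr x y z) = tr (β x) (β y) (β z))
    (hβα : ∀ x : A, β (α x) = α (β x))
    (n : ℕ) :
    IsHomBol K 𝒜 (fun x y => β^[n] (brk x y)) (fun x y z => β^[2 * n] (tr x y z))
      (fun x => β^[n] (α x)) :=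
  stmt7_general 𝒜 brk tr α hB β hβsmul hβadd hβeven hβbrk hβtr hβα n
end

section
/- Let (A,[·,·],{·,·,·}) be a Bol superalgebra and β an even self-morphism of it. Then (A, β∘[·,·], β²∘{·,·,·}, β) is a Hom-Bol superalgebra. Moreover, if f: A → A' is an even Bol superalgebra morphism to another Bol superalgebra with even self-morphism β' satisfying f∘β = β'∘f, then f is a morphism of the induced Hom-Bol superalgebras. -/
/-- A Bol superalgebra structure on a graded module. -/
structure IsBol (K : Type*) {A : Type*} [Field K] [AddCommGroup A] [Module K A]
    (𝒜 : ZMod 2 → Submodule K A) (brk : A → A → A) (tr : A → A → A → A) : Prop where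
  brk_bilin : IsBilin K brk
  tr_trilin : IsTrilin K tr
  brk_grade : ∀ (i j : ZMod 2) (x y : A), x ∈ 𝒜 i → y ∈ 𝒜 j → brk x y ∈ 𝒜 (i + j)
  tr_grade : ∀ (i j k : ZMod 2) (x y z : A),
    x ∈ 𝒜 i → y ∈ 𝒜 j → z ∈ 𝒜 k → tr x y z ∈ 𝒜 (i + j + k)
  sb1 : ∀ (i j : ZMod 2) (x y : A), x ∈ 𝒜 i → y ∈ 𝒜 j →
    brk x y = (-(sgn K i j)) • brk y x
  sb2 : ∀ (i j k : ZMod 2) (x y z : A), x ∈ 𝒜 i → y ∈ 𝒜 j → z ∈ 𝒜 k →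
    tr x y z = (-(sgn K i j)) • tr y x z
  sb3 : ∀ (i j k : ZMod 2) (x y z : A), x ∈ 𝒜 i → y ∈ 𝒜 j → z ∈ 𝒜 k →
    tr x y z + sgn K i (j + k) • tr y z x + sgn K k (i + j) • tr z x y = 0
  sb4 : ∀ (i j p q : ZMod 2) (x y u v : A),
    x ∈ 𝒜 i → y ∈ 𝒜 j → u ∈ 𝒜 p → v ∈ 𝒜 q →
    tr x y (brk u v)
      = brk (tr x y u) v + sgn K p (i + j) • brk u (tr x y v)
        + sgn K (i + j) (p + q) • (tr u v (brk x y) - brk (brk u v) (brk x y))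
  sb5 : ∀ (i j p q r : ZMod 2) (x y u v w : A),
    x ∈ 𝒜 i → y ∈ 𝒜 j → u ∈ 𝒜 p → v ∈ 𝒜 q → w ∈ 𝒜 r →
    tr x y (tr u v w)
      = tr (tr x y u) v w + sgn K p (i + j) • tr u (tr x y v) w
        + sgn K (i + j) (p + q) • tr u v (tr x y w)

/-! Each Hom-Bol identity (SHBk) for the twisted operations is the image of the Bol identity
(SBk) under a power of `β` (up to `β⁴` for (SHB5)): since `β` is multiplicative, that power
can be pushed through the operations down to the arguments, where it produces exactly the
twists that (SHBk) prescribes. -/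

section YauTwist

variable {K A : Type*} [Field K] [AddCommGroup A] [Module K A]

theorem IsBilin.linearMap_comp {brk : A → A → A} (h : IsBilin K brk) (β : A →ₗ[K] A) :
    IsBilin K (fun x y => β (brk x y)) := by
  obtain ⟨h₁, h₂, h₃, h₄⟩ := h
  exact ⟨fun c x y => by simp only [h₁, map_smul], fun x x' y => by simp only [h₂, map_add],
    fun c x y => by simp only [h₃, map_smul], fun x y y' => by simp only [h₄, map_add]⟩

theorem IsTrilin.linearMap_comp {tr : A → A → A → A} (h : IsTrilin K tr) (β : A →ₗ[K] A) :
    IsTrilin K (fun x y z => β (tr x y z)) := by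
  obtain ⟨h₁, h₂, h₃, h₄, h₅, h₆⟩ := h
  exact ⟨fun c x y z => by simp only [h₁, map_smul],
    fun x x' y z => by simp only [h₂, map_add],
    fun c x y z => by simp only [h₃, map_smul],
    fun x y y' z => by simp only [h₄, map_add],
    fun c x y z => by simp only [h₅, map_smul],
    fun x y z z' => by simp only [h₆, map_add]⟩

theorem IsBol.isHomBol_yauTwist {𝒜 : ZMod 2 → Submodule K A} {brk : A → A → A}
    {tr : A → A → A → A} (hA : IsBol K 𝒜 brk tr) (β : A →ₗ[K] A)
    (hβeven : ∀ (i : ZMod 2) (x : A), x ∈ 𝒜 i → β x ∈ 𝒜 i)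
    (hβbrk : ∀ x y : A, β (brk x y) = brk (β x) (β y))
    (hβtr : ∀ x y z : A, β (tr x y z) = tr (β x) (β y) (β z)) :
    IsHomBol K 𝒜 (fun x y => β (brk x y)) (fun x y z => β (β (tr x y z))) β where
  brk_bilin := hA.brk_bilin.linearMap_comp β
  tr_trilin := hA.tr_trilin.linearMap_comp (β ∘ₗ β)
  alpha_smul := map_smul β
  alpha_add := map_add β
  alpha_even := hβeven
  brk_grade i j x y hx hy := hβeven _ _ (hA.brk_grade i j x y hx hy)
  tr_grade i j k x y z hx hy hz := hβeven _ _ (hβeven _ _ (hA.tr_grade i j k x y z hx hy hz))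
  brk_mult x y := congrArg β (hβbrk x y)
  tr_mult x y z := congrArg (β ∘ β) (hβtr x y z)
  shb1 i j x y hx hy := by
    simp only [hA.sb1 i j x y hx hy, map_smul]
  shb2 i j k x y z hx hy hz := by
    simp only [hA.sb2 i j k x y z hx hy hz, map_smul]
  shb3 i j k x y z hx hy hz := by
    simpa only [Function.comp_apply, map_add, map_smul, map_zero]
      using congrArg (β ∘ β) (hA.sb3 i j k x y z hx hy hz)
  shb4 i j p q x y u v hx hy hu hv := by
    simpa only [Function.comp_apply, map_add, map_sub, map_smul, hβbrk, hβtr]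
      using congrArg (β ∘ β ∘ β) (hA.sb4 i j p q x y u v hx hy hu hv)
  shb5 i j p q r x y u v w hx hy hu hv hw := by
    simpa only [Function.comp_apply, map_add, map_smul, hβtr]
      using congrArg (β ∘ β ∘ β ∘ β) (hA.sb5 i j p q r x y u v w hx hy hu hv hw)

end YauTwist

theorem stmt8_general {K A A' : Type*} [Field K] [AddCommGroup A] [Module K A]
    [AddCommGroup A'] [Module K A']
    (𝒜 : ZMod 2 → Submodule K A)
    (brk : A → A → A) (tr : A → A → A → A)
    (hA : IsBol K 𝒜 brk tr)
    (β : A → A)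
    (hβsmul : ∀ (c : K) (x : A), β (c • x) = c • β x)
    (hβadd : ∀ x y : A, β (x + y) = β x + β y)
    (hβeven : ∀ (i : ZMod 2) (x : A), x ∈ 𝒜 i → β x ∈ 𝒜 i)
    (hβbrk : ∀ x y : A, β (brk x y) = brk (β x) (β y))
    (hβtr : ∀ x y z : A, β (tr x y z) = tr (β x) (β y) (β z))
    (brk' : A' → A' → A') (tr' : A' → A' → A' → A')
    (β' : A' → A')
    (f : A → A')
    (hfbrk : ∀ x y : A, f (brk x y) = brk' (f x) (f y))
    (hftr : ∀ x y z : A, f (tr x y z) = tr' (f x) (f y) (f z))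
    (hfβ : ∀ x : A, f (β x) = β' (f x)) :
    IsHomBol K 𝒜 (fun x y => β (brk x y)) (fun x y z => β (β (tr x y z))) β ∧
    (∀ x y : A, f (β (brk x y)) = β' (brk' (f x) (f y))) ∧
    (∀ x y z : A, f (β (β (tr x y z))) = β' (β' (tr' (f x) (f y) (f z)))) ∧
    (∀ x : A, f (β x) = β' (f x)) := by
  let βₗ : A →ₗ[K] A := { toFun := β, map_add' := hβadd, map_smul' := hβsmul }
  refine ⟨hA.isHomBol_yauTwist βₗ hβeven hβbrk hβtr, fun x y => ?_, fun x y z => ?_, hfβ⟩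
  · rw [hfβ, hfbrk]
  · rw [hfβ, hfβ, hftr]

/-- Corollary 5.1: Yau twisting of a Bol superalgebra along an even self-morphism
gives a Hom-Bol superalgebra, and even Bol morphisms intertwining the twisting
maps are morphisms of the induced Hom-Bol superalgebras. -/
theorem stmt8 {K A A' : Type*} [Field K] [AddCommGroup A] [Module K A]
    [AddCommGroup A'] [Module K A']
    (𝒜 : ZMod 2 → Submodule K A) (hds : DirectSum.IsInternal 𝒜)
    (brk : A → A → A) (tr : A → A → A → A)
    (hA : IsBol K 𝒜 brk tr)
    (β : A → A)
    (hβsmul : ∀ (c : K) (x : A), β (c • x) = c • β x)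
    (hβadd : ∀ x y : A, β (x + y) = β x + β y)
    (hβeven : ∀ (i : ZMod 2) (x : A), x ∈ 𝒜 i → β x ∈ 𝒜 i)
    (hβbrk : ∀ x y : A, β (brk x y) = brk (β x) (β y))
    (hβtr : ∀ x y z : A, β (tr x y z) = tr (β x) (β y) (β z))
    (𝒜' : ZMod 2 → Submodule K A') (hds' : DirectSum.IsInternal 𝒜')
    (brk' : A' → A' → A') (tr' : A' → A' → A' → A')
    (hA' : IsBol K 𝒜' brk' tr')
    (β' : A' → A')
    (hβ'smul : ∀ (c : K) (x : A'), β' (c • x) = c • β' x)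
    (hβ'add : ∀ x y : A', β' (x + y) = β' x + β' y)
    (hβ'even : ∀ (i : ZMod 2) (x : A'), x ∈ 𝒜' i → β' x ∈ 𝒜' i)
    (hβ'brk : ∀ x y : A', β' (brk' x y) = brk' (β' x) (β' y))
    (hβ'tr : ∀ x y z : A', β' (tr' x y z) = tr' (β' x) (β' y) (β' z))
    (f : A → A')
    (hfsmul : ∀ (c : K) (x : A), f (c • x) = c • f x)
    (hfadd : ∀ x y : A, f (x + y) = f x + f y)
    (hfeven : ∀ (i : ZMod 2) (x : A), x ∈ 𝒜 i → f x ∈ 𝒜' i)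
    (hfbrk : ∀ x y : A, f (brk x y) = brk' (f x) (f y))
    (hftr : ∀ x y z : A, f (tr x y z) = tr' (f x) (f y) (f z))
    (hfβ : ∀ x : A, f (β x) = β' (f x)) :
    IsHomBol K 𝒜 (fun x y => β (brk x y)) (fun x y z => β (β (tr x y z))) β ∧
    (∀ x y : A, f (β (brk x y)) = β' (brk' (f x) (f y))) ∧
    (∀ x y z : A, f (β (β (tr x y z))) = β' (β' (tr' (f x) (f y) (f z)))) ∧
    (∀ x : A, f (β x) = β' (f x)) :=
  stmt8_general 𝒜 brk tr hA β hβsmul hβadd hβeven hβbrk hβtr brk' tr' β' f hfbrk hftr hfβ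
end

section
/- Let (A,[·,·],{·,·,·},α) be a Hom-Bol superalgebra and n ≥ 0. Define x[·]^{(n)}y := α^{2^n - 1}([x,y]) and {x,y,z}^{(n)} := α^{2^{n+1} - 2}({x,y,z}). Then the n-th derived Hom-superalgebra (A, [·,·]^{(n)}, {·,·,·}^{(n)}, α^{2^n}) is a Hom-Bol superalgebra. -/
theorem IsBilin.comp_linearMap {K A : Type*} [Field K] [AddCommGroup A] [Module K A]
    {f : A → A → A} (hf : IsBilin K f) (g : A →ₗ[K] A) :
    IsBilin K fun x y => g (f x y) := by
  obtain ⟨h1, h2, h3, h4⟩ := hf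
  exact ⟨fun c x y => by simp [h1], fun x x' y => by simp [h2],
    fun c x y => by simp [h3], fun x y y' => by simp [h4]⟩

theorem IsTrilin.comp_linearMap {K A : Type*} [Field K] [AddCommGroup A] [Module K A]
    {f : A → A → A → A} (hf : IsTrilin K f) (g : A →ₗ[K] A) :
    IsTrilin K fun x y z => g (f x y z) := by
  obtain ⟨h1, h2, h3, h4, h5, h6⟩ := hf
  exact ⟨fun c x y z => by simp [h1], fun x x' y z => by simp [h2],
    fun c x y z => by simp [h3], fun x y y' z => by simp [h4],
    fun c x y z => by simp [h5], fun x y z z' => by simp [h6]⟩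

theorem Function.iterate_map_of_map₃ {A : Type*} {f : A → A} {op : A → A → A → A}
    (h : ∀ x y z, f (op x y z) = op (f x) (f y) (f z)) (k : ℕ) (x y z : A) :
    f^[k] (op x y z) = op (f^[k] x) (f^[k] y) (f^[k] z) := by
  induction k generalizing x y z with
  | zero => rfl
  | succ k ih => simp only [Function.iterate_succ_apply, h, ih]

namespace IsHomBol

variable {K A : Type*} [Field K] [AddCommGroup A] [Module K A] {𝒜 : ZMod 2 → Submodule K A}
  {brk : A → A → A} {tr : A → A → A → A} {α : A → A}

def twistLinearMap (hB : IsHomBol K 𝒜 brk tr α) : A →ₗ[K] A where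
  toFun := α
  map_add' := hB.alpha_add
  map_smul' := hB.alpha_smul

theorem iterate_eq_pow (hB : IsHomBol K 𝒜 brk tr α) (k : ℕ) :
    α^[k] = ⇑(hB.twistLinearMap ^ k) :=
  (Module.End.coe_pow hB.twistLinearMap k).symm

theorem iterate_add (hB : IsHomBol K 𝒜 brk tr α) (k : ℕ) (x y : A) :
    α^[k] (x + y) = α^[k] x + α^[k] y := by
  rw [hB.iterate_eq_pow, map_add]

theorem iterate_smul (hB : IsHomBol K 𝒜 brk tr α) (k : ℕ) (c : K) (x : A) :
    α^[k] (c • x) = c • α^[k] x := by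
  rw [hB.iterate_eq_pow, map_smul]

theorem iterate_sub (hB : IsHomBol K 𝒜 brk tr α) (k : ℕ) (x y : A) :
    α^[k] (x - y) = α^[k] x - α^[k] y := by
  rw [hB.iterate_eq_pow, map_sub]

theorem iterate_zero (hB : IsHomBol K 𝒜 brk tr α) (k : ℕ) : α^[k] (0 : A) = 0 := by
  rw [hB.iterate_eq_pow, map_zero]

theorem iterate_mem (hB : IsHomBol K 𝒜 brk tr α) (k : ℕ) {i : ZMod 2} {x : A}
    (hx : x ∈ 𝒜 i) : α^[k] x ∈ 𝒜 i := by
  induction k with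
  | zero => exact hx
  | succ k ih => rw [Function.iterate_succ_apply']; exact hB.alpha_even i _ ih

theorem iterate_brk (hB : IsHomBol K 𝒜 brk tr α) (k : ℕ) (x y : A) :
    α^[k] (brk x y) = brk (α^[k] x) (α^[k] y) :=
  Function.Semiconj₂.iterate hB.brk_mult k x y

theorem iterate_tr (hB : IsHomBol K 𝒜 brk tr α) (k : ℕ) (x y z : A) :
    α^[k] (tr x y z) = tr (α^[k] x) (α^[k] y) (α^[k] z) :=
  Function.iterate_map_of_map₃ hB.tr_mult k x y z

/-- The Yau twist by `α^m`; the `n`-th derived algebra is the case `m = 2^n - 1`. -/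
theorem iterate_twist (hB : IsHomBol K 𝒜 brk tr α) (m : ℕ) :
    IsHomBol K 𝒜 (fun x y => α^[m] (brk x y)) (fun x y z => α^[2 * m] (tr x y z))
      α^[m + 1] := by
  have hcomm : ∀ x, α (α^[m] x) = α^[m] (α x) := Function.Commute.self_iterate α m
  refine
    { brk_bilin := hB.iterate_eq_pow m ▸ hB.brk_bilin.comp_linearMap _
      tr_trilin := hB.iterate_eq_pow (2 * m) ▸ hB.tr_trilin.comp_linearMap _
      alpha_smul := hB.iterate_smul (m + 1)
      alpha_add := hB.iterate_add (m + 1)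
      alpha_even := fun i x hx => hB.iterate_mem _ hx
      brk_grade := fun i j x y hx hy => hB.iterate_mem _ (hB.brk_grade i j x y hx hy)
      tr_grade := fun i j k x y z hx hy hz =>
        hB.iterate_mem _ (hB.tr_grade i j k x y z hx hy hz)
      brk_mult := fun x y => ?_
      tr_mult := fun x y z => ?_
      shb1 := fun i j x y hx hy => by rw [hB.shb1 i j x y hx hy, hB.iterate_smul]
      shb2 := fun i j k x y z hx hy hz => by rw [hB.shb2 i j k x y z hx hy hz, hB.iterate_smul]
      shb3 := fun i j k x y z hx hy hz => ?_
      shb4 := fun i j p q x y u v hx hy hu hv => ?_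
      shb5 := fun i j p q r x y u v w hx hy hu hv hw => ?_ }
  · rw [← hB.iterate_brk (m + 1), ← Function.iterate_add_apply, ← Function.iterate_add_apply,
      Nat.add_comm]
  · rw [← hB.iterate_tr (m + 1), ← Function.iterate_add_apply, ← Function.iterate_add_apply,
      Nat.add_comm]
  · simp only [← hB.iterate_smul, ← hB.iterate_add]
    rw [hB.shb3 i j k x y z hx hy hz, hB.iterate_zero]
  -- both sides of the twisted identities are `α^[3m]` (resp. `α^[4m]`) of those of `α`
  · simp only [two_mul, Function.iterate_add_apply, Function.iterate_one, hcomm,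
      ← hB.iterate_brk, ← hB.iterate_tr]
    rw [hB.shb4 i j p q x y u v hx hy hu hv]
    simp only [hB.iterate_add, hB.iterate_smul, hB.iterate_sub]
  · simp only [two_mul, Function.iterate_add_apply, Function.iterate_one, hcomm,
      ← hB.iterate_tr]
    rw [hB.shb5 i j p q r x y u v w hx hy hu hv hw]
    simp only [hB.iterate_add, hB.iterate_smul]

end IsHomBol

theorem stmt9_general {K A : Type*} [Field K] [AddCommGroup A] [Module K A]
    (𝒜 : ZMod 2 → Submodule K A)
    (brk : A → A → A) (tr : A → A → A → A) (α : A → A)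
    (hB : IsHomBol K 𝒜 brk tr α) (n : ℕ) :
    IsHomBol K 𝒜 (fun x y => α^[2 ^ n - 1] (brk x y))
      (fun x y z => α^[2 ^ (n + 1) - 2] (tr x y z))
      (fun x => α^[2 ^ n] x) := by
  obtain ⟨m, hm⟩ : ∃ m, 2 ^ n = m + 1 :=
    ⟨2 ^ n - 1, (Nat.succ_pred_eq_of_pos (by positivity)).symm⟩
  have h2 : 2 ^ (n + 1) - 2 = 2 * m := by rw [pow_succ, hm]; omega
  rw [hm, h2, Nat.add_sub_cancel]
  exact hB.iterate_twist m

/-- Theorem 5.2: the n-th derived Hom-superalgebra of a Hom-Bol superalgebra is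
a Hom-Bol superalgebra. -/
theorem stmt9 {K A : Type*} [Field K] [AddCommGroup A] [Module K A]
    (𝒜 : ZMod 2 → Submodule K A) (hds : DirectSum.IsInternal 𝒜)
    (brk : A → A → A) (tr : A → A → A → A) (α : A → A)
    (hB : IsHomBol K 𝒜 brk tr α) (n : ℕ) :
    IsHomBol K 𝒜 (fun x y => α^[2 ^ n - 1] (brk x y))
      (fun x y z => α^[2 ^ (n + 1) - 2] (tr x y z))
      (fun x => α^[2 ^ n] x) :=
  stmt9_general 𝒜 brk tr α hB n
end

section
/- In a multiplicative Hom-Jordan superalgebra (A,∘,α), the operator identity L(L(x,y)(z)) ∘ α² = L(α(x),α(y))L(z) - (-1)^{|z|(|x|+|y|)}L(α²(z))L(x,y) holds for all homogeneous x,y,z, where L(x)(w) = x∘w and L(x,y) = L(α(x))L(y) - (-1)^{|x||y|}L(α(y))L(x). -/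
@[simp]
lemma sgn_zero_left {K : Type*} [Field K] (j : ZMod 2) : sgn K 0 j = 1 := by
  simp [sgn]

@[simp]
lemma sgn_zero_right {K : Type*} [Field K] (i : ZMod 2) : sgn K i 0 = 1 := by
  simp [sgn]

@[simp]
lemma sgn_one_one {K : Type*} [Field K] : sgn K 1 1 = -1 := by
  simp [sgn, ZMod.val_one]

lemma zmod_two_eq_zero_or_eq_one : ∀ m : ZMod 2, m = 0 ∨ m = 1 := by
  decide

namespace IsBilin

variable {K A : Type*} [Field K] [AddCommGroup A] [Module K A] {mul : A → A → A}

def toLinearMap₂ (h : IsBilin K mul) : A →ₗ[K] A →ₗ[K] A :=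
  LinearMap.mk₂ K mul h.2.1 h.1 h.2.2.2 h.2.2.1

lemma smul_left (h : IsBilin K mul) (c : K) (a w : A) : mul (c • a) w = c • mul a w :=
  h.1 c a w

lemma smul_right (h : IsBilin K mul) (c : K) (w a : A) : mul w (c • a) = c • mul w a :=
  h.2.2.1 c w a

lemma add_right (h : IsBilin K mul) (w a b : A) : mul w (a + b) = mul w a + mul w b :=
  h.2.2.2 w a b

lemma sub_left (h : IsBilin K mul) (a b w : A) : mul (a - b) w = mul a w - mul b w :=
  LinearMap.map_sub₂ h.toLinearMap₂ a b w

lemma sub_right (h : IsBilin K mul) (w a b : A) : mul w (a - b) = mul w a - mul w b :=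
  map_sub (h.toLinearMap₂ w) a b

lemma zero_right (h : IsBilin K mul) (w : A) : mul w 0 = 0 :=
  map_zero (h.toLinearMap₂ w)

end IsBilin

@[elab_as_elim]
theorem DirectSum.IsInternal.induction_on_homogeneous {ι R M : Type*} [DecidableEq ι]
    [Semiring R] [AddCommMonoid M] [Module R M] {𝒜 : ι → Submodule R M}
    (h : DirectSum.IsInternal 𝒜) {motive : M → Prop} (v : M) (zero : motive 0)
    (add : ∀ a b, motive a → motive b → motive (a + b))
    (mem : ∀ i, ∀ w ∈ 𝒜 i, motive w) : motive v :=
  Submodule.iSup_induction 𝒜 (motive := motive) (h.submodule_iSup_eq_top ▸ Submodule.mem_top)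
    mem zero add

structure IsHomJordanSuperalgebra (K : Type*) {A : Type*} [Field K] [AddCommGroup A]
    [Module K A] (𝒜 : ZMod 2 → Submodule K A) (mul : A → A → A) (α : A → A) : Prop where
  bilin : IsBilin K mul
  mul_mem : ∀ (i j : ZMod 2) (x y : A), x ∈ 𝒜 i → y ∈ 𝒜 j → mul x y ∈ 𝒜 (i + j)
  supercomm : ∀ (i j : ZMod 2) (x y : A), x ∈ 𝒜 i → y ∈ 𝒜 j →
    mul x y = sgn K i j • mul y x
  map_add : ∀ x y : A, α (x + y) = α x + α y
  map_mem : ∀ (i : ZMod 2) (x : A), x ∈ 𝒜 i → α x ∈ 𝒜 i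
  map_mul : ∀ x y : A, α (mul x y) = mul (α x) (α y)
  jordan : ∀ (i j k l : ZMod 2) (x y z t : A),
    x ∈ 𝒜 i → y ∈ 𝒜 j → z ∈ 𝒜 k → t ∈ 𝒜 l →
    sgn K l (i + k) • hasc mul α (mul x y) (α z) (α t)
      + sgn K i (j + k) • hasc mul α (mul y t) (α z) (α x)
      + sgn K j (l + k) • hasc mul α (mul t x) (α z) (α y) = 0

namespace IsHomJordanSuperalgebra

variable {K A : Type*} [Field K] [AddCommGroup A] [Module K A]
  {𝒜 : ZMod 2 → Submodule K A} {mul : A → A → A} {α : A → A}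

lemma map_zero (H : IsHomJordanSuperalgebra K 𝒜 mul α) : α 0 = 0 :=
  (AddMonoidHom.mk' α H.map_add).map_zero

lemma supercomm_outer (H : IsHomJordanSuperalgebra K 𝒜 mul α) {p q r : ZMod 2} {a b w : A}
    (ha : a ∈ 𝒜 p) (hb : b ∈ 𝒜 q) (hw : w ∈ 𝒜 r) :
    mul (α (α a)) (mul (α b) w)
      = sgn K q r • sgn K p (r + q) • mul (mul w (α b)) (α (α a)) := by
  rw [H.supercomm q r _ _ (H.map_mem q b hb) hw, H.bilin.smul_right,
    H.supercomm p (r + q) _ _ (H.map_mem p _ (H.map_mem p a ha))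
      (H.mul_mem r q _ _ hw (H.map_mem q b hb))]

lemma jordan_expanded (H : IsHomJordanSuperalgebra K 𝒜 mul α) {i j k l : ZMod 2} {x y z v : A}
    (hx : x ∈ 𝒜 i) (hy : y ∈ 𝒜 j) (hz : z ∈ 𝒜 k) (hv : v ∈ 𝒜 l) :
    sgn K l (j + i) • (mul (mul (mul y z) (α x)) (α (α v))
        - mul (mul (α y) (α z)) (mul (α x) (α v)))
      + sgn K j (k + i) • (mul (mul (mul z v) (α x)) (α (α y))
        - mul (mul (α z) (α v)) (mul (α x) (α y)))
      + sgn K k (l + i) • (mul (mul (mul v y) (α x)) (α (α z))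
        - sgn K l j • sgn K (j + l) (i + k) •
          mul (mul (α x) (α z)) (mul (α y) (α v))) = 0 := by
  have hx' := H.map_mem i x hx
  have hy' := H.map_mem j y hy
  have hv' := H.map_mem l v hv
  have h := H.jordan j k i l y z x v hy hz hx hv
  rwa [hasc, hasc, hasc, H.map_mul, H.map_mul, H.map_mul, H.supercomm l j _ _ hv' hy',
    H.bilin.smul_left, H.supercomm (j + l) (i + k) _ _ (H.mul_mem j l _ _ hy' hv')
      (H.mul_mem i k _ _ hx' (H.map_mem k z hz))] at h

lemma operator_identity_of_mem (H : IsHomJordanSuperalgebra K 𝒜 mul α)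
    {i j k l : ZMod 2} {x y z v : A}
    (hx : x ∈ 𝒜 i) (hy : y ∈ 𝒜 j) (hz : z ∈ 𝒜 k) (hv : v ∈ 𝒜 l) :
    mul (mul (α x) (mul y z) - sgn K i j • mul (α y) (mul x z)) (α (α v))
      = mul (α (α x)) (mul (α y) (mul z v))
        - sgn K i j • mul (α (α y)) (mul (α x) (mul z v))
        - sgn K k (i + j) •
          mul (α (α z)) (mul (α x) (mul y v) - sgn K i j • mul (α y) (mul x v)) := by
  have hzv := H.mul_mem k l z v hz hv
  rw [H.supercomm j l y v hy hv, H.supercomm i l x v hx hv,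
    H.supercomm i (j + k) _ _ (H.map_mem i x hx) (H.mul_mem j k y z hy hz),
    H.supercomm j (i + k) _ _ (H.map_mem j y hy) (H.mul_mem i k x z hx hz)]
  simp only [H.bilin.sub_left, H.bilin.sub_right, H.bilin.smul_left, H.bilin.smul_right]
  rw [H.supercomm_outer hx hy hzv, H.supercomm_outer hy hx hzv,
    H.supercomm_outer hz hx (H.mul_mem l j v y hv hy),
    H.supercomm_outer hz hy (H.mul_mem l i v x hv hx)]
  have h₁ := H.jordan_expanded hx hy hz hv
  have h₂ := H.jordan_expanded hy hx hz hv
  rw [H.supercomm j i _ _ (H.map_mem j y hy) (H.map_mem i x hx), H.bilin.smul_right] at h₂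
  -- The coefficients match the two terms of the left-hand side; the remaining signs are
  -- checked over all degrees.
  linear_combination (norm := skip)
    (sgn K i (j + k) * sgn K l (i + j)) • h₁
      - (sgn K i j * sgn K j (i + k) * sgn K l (i + j)) • h₂
  rcases zmod_two_eq_zero_or_eq_one i with rfl | rfl <;>
  rcases zmod_two_eq_zero_or_eq_one j with rfl | rfl <;>
  rcases zmod_two_eq_zero_or_eq_one k with rfl | rfl <;>
  rcases zmod_two_eq_zero_or_eq_one l with rfl | rfl <;>
  simp only [zero_add, add_zero, CharTwo.add_self_eq_zero, sgn_zero_left, sgn_zero_right,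
    sgn_one_one] <;>
  module

end IsHomJordanSuperalgebra

theorem stmt15_general {K A : Type*} [Field K] [AddCommGroup A] [Module K A]
    (𝒜 : ZMod 2 → Submodule K A) (hds : DirectSum.IsInternal 𝒜)
    (mul : A → A → A) (hbil : IsBilin K mul)
    (hgr : ∀ (i j : ZMod 2) (x y : A), x ∈ 𝒜 i → y ∈ 𝒜 j → mul x y ∈ 𝒜 (i + j))
    (α : A → A)
    (hαadd : ∀ x y : A, α (x + y) = α x + α y)
    (hαeven : ∀ (i : ZMod 2) (x : A), x ∈ 𝒜 i → α x ∈ 𝒜 i)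
    (hαmul : ∀ x y : A, α (mul x y) = mul (α x) (α y))
    (hcomm : ∀ (i j : ZMod 2) (x y : A), x ∈ 𝒜 i → y ∈ 𝒜 j →
      mul x y = sgn K i j • mul y x)
    (hjordan : ∀ (i j k l : ZMod 2) (x y z t : A),
      x ∈ 𝒜 i → y ∈ 𝒜 j → z ∈ 𝒜 k → t ∈ 𝒜 l →
      sgn K l (i + k) • hasc mul α (mul x y) (α z) (α t)
        + sgn K i (j + k) • hasc mul α (mul y t) (α z) (α x)
        + sgn K j (l + k) • hasc mul α (mul t x) (α z) (α y) = 0)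
    (i j k : ZMod 2) (x y z : A)
    (hx : x ∈ 𝒜 i) (hy : y ∈ 𝒜 j) (hz : z ∈ 𝒜 k) (v : A) :
    mul (mul (α x) (mul y z) - sgn K i j • mul (α y) (mul x z)) (α (α v))
      = mul (α (α x)) (mul (α y) (mul z v))
        - sgn K i j • mul (α (α y)) (mul (α x) (mul z v))
        - sgn K k (i + j) •
          mul (α (α z)) (mul (α x) (mul y v) - sgn K i j • mul (α y) (mul x v)) := by
  have H : IsHomJordanSuperalgebra K 𝒜 mul α :=
    ⟨hbil, hgr, hcomm, hαadd, hαeven, hαmul, hjordan⟩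
  induction v using hds.induction_on_homogeneous with
  | zero =>
    simp only [H.map_zero, hbil.zero_right, smul_zero, sub_self]
  | add a b ha hb =>
    simp only [hαadd, hbil.add_right, hbil.sub_right, smul_add] at ha hb ⊢
    linear_combination (norm := module) ha + hb
  | mem l v hv => exact H.operator_identity_of_mem hx hy hz hv

/-- Lemma 7.3: the operator identity `L(L(x,y)(z)) ∘ α² = L(x,y,z)` in a
multiplicative Hom-Jordan superalgebra, evaluated at an arbitrary `v`. -/
theorem stmt15 {K A : Type*} [Field K] [AddCommGroup A] [Module K A]
    (h2 : (2 : K) ≠ 0) (h3 : (3 : K) ≠ 0)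
    (𝒜 : ZMod 2 → Submodule K A) (hds : DirectSum.IsInternal 𝒜)
    (mul : A → A → A) (hbil : IsBilin K mul)
    (hgr : ∀ (i j : ZMod 2) (x y : A), x ∈ 𝒜 i → y ∈ 𝒜 j → mul x y ∈ 𝒜 (i + j))
    (α : A → A)
    (hαsmul : ∀ (c : K) (x : A), α (c • x) = c • α x)
    (hαadd : ∀ x y : A, α (x + y) = α x + α y)
    (hαeven : ∀ (i : ZMod 2) (x : A), x ∈ 𝒜 i → α x ∈ 𝒜 i)
    (hαmul : ∀ x y : A, α (mul x y) = mul (α x) (α y))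
    (hcomm : ∀ (i j : ZMod 2) (x y : A), x ∈ 𝒜 i → y ∈ 𝒜 j →
      mul x y = sgn K i j • mul y x)
    (hjordan : ∀ (i j k l : ZMod 2) (x y z t : A),
      x ∈ 𝒜 i → y ∈ 𝒜 j → z ∈ 𝒜 k → t ∈ 𝒜 l →
      sgn K l (i + k) • hasc mul α (mul x y) (α z) (α t)
        + sgn K i (j + k) • hasc mul α (mul y t) (α z) (α x)
        + sgn K j (l + k) • hasc mul α (mul t x) (α z) (α y) = 0)
    (i j k : ZMod 2) (x y z : A)
    (hx : x ∈ 𝒜 i) (hy : y ∈ 𝒜 j) (hz : z ∈ 𝒜 k) (v : A) :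
    mul (mul (α x) (mul y z) - sgn K i j • mul (α y) (mul x z)) (α (α v))
      = mul (α (α x)) (mul (α y) (mul z v))
        - sgn K i j • mul (α (α y)) (mul (α x) (mul z v))
        - sgn K k (i + j) •
          mul (α (α z)) (mul (α x) (mul y v) - sgn K i j • mul (α y) (mul x v)) :=
  stmt15_general 𝒜 hds mul hbil hgr α hαadd hαeven hαmul hcomm hjordan i j k x y z hx hy hz v
end
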